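/- For real x ≠ y, ∫₀^∞ Ai(x+λ)Ai(y+λ) dλ = (Ai(x)Ai'(y) − Ai'(x)Ai(y))/(x−y), where Ai is the Airy function. -/

import Mathlib

/-!
The shifted Wronskian `W(λ) = Ai(x+λ) Ai'(y+λ) - Ai'(x+λ) Ai(y+λ)` satisfies
`W' = (y - x) Ai(x+λ) Ai(y+λ)`, because the `Ai' Ai'` terms cancel and `Ai'' = t Ai` turns the
remaining terms into `((y+λ) - (x+λ)) Ai(x+λ) Ai(y+λ)`. Superexponential decay makes the integrand
integrable on `(0, ∞)` and `W(λ) → 0`, so the fundamental theorem of calculus gives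
`(y - x) ∫₀^∞ Ai(x+λ) Ai(y+λ) dλ = -W(0)`.
-/

open MeasureTheory Filter Set Real Topology Asymptotics

def SuperexpDecay (f : ℝ → ℝ) : Prop :=
  ∀ c : ℝ, Tendsto (fun t => exp (c * t) * f t) atTop (𝓝 0)

namespace SuperexpDecay

variable {f g : ℝ → ℝ}

theorem tendsto_zero (hf : SuperexpDecay f) : Tendsto f atTop (𝓝 0) := by
  simpa using hf 0

theorem comp_const_add (hf : SuperexpDecay f) (a : ℝ) : SuperexpDecay fun t => f (a + t) := by
  intro c
  have h := ((hf c).comp (tendsto_atTop_add_const_left atTop a tendsto_id)).const_mul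
    (exp (-(c * a)))
  rw [mul_zero] at h
  refine h.congr fun t => ?_
  simp only [Function.comp_apply, id]
  rw [← mul_assoc, ← exp_add, mul_add, neg_add_cancel_left]

theorem mul (hf : SuperexpDecay f) (hg : SuperexpDecay g) : SuperexpDecay (f * g) := by
  intro c
  simpa [mul_assoc] using (hf c).mul hg.tendsto_zero

theorem integrableOn_Ioi (hf : SuperexpDecay f) (hcont : Continuous f) (a : ℝ) :
    IntegrableOn f (Ioi a) := by
  refine integrable_of_isBigO_exp_neg one_pos hcont.continuousOn ?_
  have hbounded := (isBigO_refl (fun t => exp (-1 * t)) atTop).mul ((hf 1).isBigO_one ℝ)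
  refine hbounded.congr (fun t => ?_) fun t => mul_one _
  rw [← mul_assoc, ← exp_add, neg_one_mul, one_mul, neg_add_cancel, exp_zero, one_mul]

end SuperexpDecay

theorem hasDerivAt_shifted_wronskian {f f' : ℝ → ℝ} (hf : ∀ t, HasDerivAt f (f' t) t)
    (hf' : ∀ t, HasDerivAt f' (t * f t) t) (x y l : ℝ) :
    HasDerivAt (fun l => f (x + l) * f' (y + l) - f' (x + l) * f (y + l))
      ((y - x) * (f (x + l) * f (y + l))) l := by
  have hshift : ∀ {g g' : ℝ → ℝ} (a : ℝ), (∀ t, HasDerivAt g (g' t) t) →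
      HasDerivAt (fun l => g (a + l)) (g' (a + l)) l := fun a hg => by
    simpa using (hg (a + l)).comp_const_add a l
  refine (((hshift x hf).mul (hshift y hf')).sub ((hshift x hf').mul (hshift y hf))).congr_deriv ?_
  ring

/-- The Christoffel–Darboux form of the Airy kernel.  Here `Ai` denotes the Airy
function, characterized by the differential equation `Ai'' t = t * Ai t` together
with superexponential decay of `Ai` and `Ai'` at `+∞`. -/
theorem airy_kernel_integral (Ai Ai' : ℝ → ℝ)
    (hderiv : ∀ t, HasDerivAt Ai (Ai' t) t)
    (hderiv' : ∀ t, HasDerivAt Ai' (t * Ai t) t)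
    (hdecay : ∀ c : ℝ, Filter.Tendsto (fun t => Real.exp (c * t) * Ai t) Filter.atTop (nhds 0))
    (hdecay' : ∀ c : ℝ, Filter.Tendsto (fun t => Real.exp (c * t) * Ai' t) Filter.atTop (nhds 0))
    (x y : ℝ) (hxy : x ≠ y) :
    ∫ l in Set.Ioi (0:ℝ), Ai (x + l) * Ai (y + l)
      = (Ai x * Ai' y - Ai' x * Ai y) / (x - y) := by
  have hAi : SuperexpDecay Ai := hdecay
  have hAi' : SuperexpDecay Ai' := hdecay'
  have hcont : Continuous Ai := continuous_iff_continuousAt.mpr fun t => (hderiv t).continuousAt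
  have hint : IntegrableOn (fun l => Ai (x + l) * Ai (y + l)) (Ioi 0) :=
    ((hAi.comp_const_add x).mul (hAi.comp_const_add y)).integrableOn_Ioi (by fun_prop) 0
  have hW : Tendsto (fun l => Ai (x + l) * Ai' (y + l) - Ai' (x + l) * Ai (y + l)) atTop (𝓝 0) := by
    simpa using ((hAi.comp_const_add x).tendsto_zero.mul (hAi'.comp_const_add y).tendsto_zero).sub
      ((hAi'.comp_const_add x).tendsto_zero.mul (hAi.comp_const_add y).tendsto_zero)
  have hftc := integral_Ioi_of_hasDerivAt_of_tendsto'
    (fun l _ => hasDerivAt_shifted_wronskian hderiv hderiv' x y l) (hint.const_mul (y - x)) hW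
  rw [integral_const_mul, add_zero, add_zero] at hftc
  rw [eq_div_iff (sub_ne_zero.mpr hxy)]
  linear_combination -hftc
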